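/- arXiv:1707.07193 — 5 statements merged into one kernel-verified Lean document; each statement's English description precedes it below -/
import Mathlib

section
/- The expected number of random elements needed to generate the symmetric group on 3 points is e(Sym(3)) = 29/10. -/
/-- The probability that `k` uniformly random elements of `G` generate `G`. -/
noncomputable def genProb (G : Type*) [Group G] (k : ℕ) : ℝ :=
  (Nat.card {v : Fin k → G // Subgroup.closure (Set.range v) = ⊤} : ℝ) /
    (Nat.card G : ℝ) ^ k

/-- `egen G = ∑_{k ≥ 0} (1 - P_G(k))`, the expected number of random elements needed to
generate `G`. -/
noncomputable def egen (G : Type*) [Group G] : ℝ :=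
  ∑' k : ℕ, (1 - genProb G k)

/-!
A tuple fails to generate `S₃` exactly when all its entries lie in one maximal subgroup, i.e.
in `A₃` or in one of the three point stabilisers. These four subgroups meet pairwise in `1`,
so `3 ^ k + 3 * (2 ^ k - 1)` of the `6 ^ k` tuples of length `k` do not generate. Hence
`1 - P(k) = (1/2) ^ k + 3 * (1/3) ^ k - 3 * (1/6) ^ k`, and summing the geometric series gives
`2 + 9/2 - 18/5 = 29/10`.
-/

open Equiv Subgroup Finset

theorem one_sub_genProb {G : Type*} [Group G] [Finite G] (k : ℕ) :
    1 - genProb G k =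
      Nat.card {v : Fin k → G // closure (Set.range v) ≠ ⊤} / (Nat.card G : ℝ) ^ k := by
  classical
  have hsplit : Nat.card {v : Fin k → G // closure (Set.range v) = ⊤} +
      Nat.card {v : Fin k → G // closure (Set.range v) ≠ ⊤} = Nat.card G ^ k := by
    rw [← Nat.card_sum, Nat.card_congr (Equiv.sumCompl _), Nat.card_fun, Nat.card_fin]
  have hG : (Nat.card G : ℝ) ^ k ≠ 0 := pow_ne_zero _ (mod_cast Nat.card_pos.ne')
  rw [genProb, eq_div_iff hG, sub_mul, one_mul, div_mul_cancel₀ _ hG, ← Nat.cast_pow,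
    ← hsplit, Nat.cast_add]
  ring

theorem Subgroup.closure_range_ne_top_iff_of_cover {G ι κ : Type*} [Group G]
    {H : ι → Subgroup G} (hH : ∀ i, H i ≠ ⊤) (hcover : ∀ K : Subgroup G, K ≠ ⊤ → ∃ i, K ≤ H i)
    (v : κ → G) : closure (Set.range v) ≠ ⊤ ↔ ∃ i, ∀ j, v j ∈ H i := by
  constructor
  · intro h
    obtain ⟨i, hi⟩ := hcover _ h
    exact ⟨i, fun j => hi (subset_closure ⟨j, rfl⟩)⟩
  · rintro ⟨i, hi⟩ htop
    apply hH i
    rw [eq_top_iff, ← htop, closure_le]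
    rintro _ ⟨j, rfl⟩
    exact hi j

theorem Subgroup.natCard_exists_forall_mem_of_pairwise_inf_eq_bot {G ι : Type*} [Group G]
    [Finite G] [Fintype ι] [Nonempty ι] {H : ι → Subgroup G}
    (hH : Pairwise fun i j => H i ⊓ H j = ⊥) (k : ℕ) :
    Nat.card {v : Fin k → G // ∃ i, ∀ j, v j ∈ H i} = 1 + ∑ i, (Nat.card (H i) ^ k - 1) := by
  classical
  have := Fintype.ofFinite G
  set A : ι → Finset (Fin k → G) := fun i => {v | ∀ j, v j ∈ H i}
  have hA (i : ι) : #(A i) = Nat.card (H i) ^ k := by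
    rw [← Fintype.card_subtype, Fintype.card_congr Equiv.subtypePiEquivPi,
      ← Nat.card_eq_fintype_card, Nat.card_fun, Nat.card_fin]
  have hone (i : ι) : (1 : Fin k → G) ∈ A i := by simp [A, one_mem]
  have hunion : ({v | ∃ i, ∀ j, v j ∈ H i} : Finset (Fin k → G)) =
      insert 1 (univ.biUnion fun i => (A i).erase 1) := by
    ext v
    by_cases hv : v = 1
    · simp [hv, one_mem]
    · simp [A, hv]
  have hdisj : ((univ : Finset ι) : Set ι).PairwiseDisjoint fun i => (A i).erase 1 := by
    intro i _ j _ hij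
    refine Finset.disjoint_left.mpr fun v hvi hvj => ?_
    simp only [A, Finset.mem_erase, Finset.mem_filter, Finset.mem_univ, true_and] at hvi hvj
    refine hvi.1 (funext fun l => ?_)
    have hl : v l ∈ H i ⊓ H j := ⟨hvi.2 l, hvj.2 l⟩
    rwa [hH hij, mem_bot] at hl
  rw [Nat.card_eq_fintype_card, Fintype.card_subtype, hunion, card_insert_of_notMem (by simp),
    card_biUnion hdisj, add_comm]
  simp only [card_erase_of_mem (hone _), hA]

theorem Subgroup.eq_top_of_mem_of_card_eq_orderOf_mul {G : Type*} [Group G] [Finite G]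
    {K : Subgroup G} {a b : G} (haK : a ∈ K) (hbK : b ∈ K) (hab : (orderOf a).Coprime (orderOf b))
    (hG : Nat.card G = orderOf a * orderOf b) : K = ⊤ :=
  eq_top_of_card_eq K <| Nat.dvd_antisymm K.card_subgroup_dvd_card <| hG ▸
    hab.mul_dvd_of_dvd_of_dvd (K.orderOf_dvd_natCard haK) (K.orderOf_dvd_natCard hbK)

theorem natCard_perm_fin_three : Nat.card (Perm (Fin 3)) = 6 := by
  rw [Nat.card_perm, Nat.card_fin]
  rfl

def maxSubgroupPermFinThree : Option (Fin 3) → Subgroup (Perm (Fin 3))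
  | none => alternatingGroup (Fin 3)
  | some i => MulAction.stabilizer (Perm (Fin 3)) i

@[simp]
theorem mem_maxSubgroupPermFinThree_none {x : Perm (Fin 3)} :
    x ∈ maxSubgroupPermFinThree none ↔ Perm.sign x = 1 :=
  Perm.mem_alternatingGroup

@[simp]
theorem mem_maxSubgroupPermFinThree_some {x : Perm (Fin 3)} {i : Fin 3} :
    x ∈ maxSubgroupPermFinThree (some i) ↔ x i = i :=
  MulAction.mem_stabilizer_iff

theorem natCard_maxSubgroupPermFinThree_none : Nat.card (maxSubgroupPermFinThree none) = 3 := by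
  rw [maxSubgroupPermFinThree, nat_card_alternatingGroup, Nat.card_fin]
  rfl

theorem natCard_maxSubgroupPermFinThree_some (i : Fin 3) :
    Nat.card (maxSubgroupPermFinThree (some i)) = 2 := by
  rw [Nat.card_congr (Equiv.subtypeEquivRight fun _ => mem_maxSubgroupPermFinThree_some),
    Nat.card_eq_fintype_card]
  revert i
  decide

theorem maxSubgroupPermFinThree_ne_top (o : Option (Fin 3)) : maxSubgroupPermFinThree o ≠ ⊤ := by
  rw [Ne, eq_top_iff']
  revert o
  simp only [Option.forall, mem_maxSubgroupPermFinThree_none, mem_maxSubgroupPermFinThree_some]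
  decide

theorem pairwise_inf_maxSubgroupPermFinThree :
    Pairwise fun o o' => maxSubgroupPermFinThree o ⊓ maxSubgroupPermFinThree o' = ⊥ := by
  simp only [Pairwise, eq_bot_iff_forall, Subgroup.mem_inf, Option.forall, ne_eq,
    reduceCtorEq, Option.some_inj, not_true, not_false_eq_true, false_implies, true_implies,
    mem_maxSubgroupPermFinThree_none, mem_maxSubgroupPermFinThree_some]
  decide

theorem exists_le_maxSubgroupPermFinThree {K : Subgroup (Perm (Fin 3))} (hK : K ≠ ⊤) :
    ∃ o, K ≤ maxSubgroupPermFinThree o := by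
  by_cases hA : K ≤ maxSubgroupPermFinThree none
  · exact ⟨none, hA⟩
  obtain ⟨a, haK, ha⟩ := SetLike.not_le_iff_exists.mp hA
  rw [mem_maxSubgroupPermFinThree_none] at ha
  replace ha : Perm.sign a = -1 := (Int.units_eq_one_or _).resolve_left ha
  obtain ⟨i, hai⟩ : ∃ i, a i = i :=
    (by decide : ∀ a : Perm (Fin 3), Perm.sign a = -1 → ∃ i, a i = i) a ha
  refine ⟨some i, fun b hbK => ?_⟩
  rw [mem_maxSubgroupPermFinThree_some]
  by_contra hbi
  -- `K` would contain a transposition and a 3-cycle, so `6 ∣ |K|`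
  obtain ⟨c, hcK, hc, hci⟩ : ∃ c ∈ K, Perm.sign c = 1 ∧ c i ≠ i := by
    rcases Int.units_eq_one_or (Perm.sign b) with hb | hb
    · exact ⟨b, hbK, hb, hbi⟩
    · refine ⟨a * b, K.mul_mem haK hbK, by simp [ha, hb], fun h => hbi (a.injective ?_)⟩
      rwa [hai]
  have ha2 : orderOf a = 2 := orderOf_eq_prime
    ((by decide : ∀ a : Perm (Fin 3), Perm.sign a = -1 → a ^ 2 = 1) a ha)
    (fun h => by simp [h] at ha)
  have hc3 : orderOf c = 3 := orderOf_eq_prime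
    ((by decide : ∀ c : Perm (Fin 3), Perm.sign c = 1 → c ^ 3 = 1) c hc)
    (fun h => by simp [h] at hci)
  exact hK (eq_top_of_mem_of_card_eq_orderOf_mul haK hcK (by rw [ha2, hc3]; decide)
    (by rw [ha2, hc3, natCard_perm_fin_three]))

theorem one_sub_genProb_perm_fin_three (k : ℕ) :
    1 - genProb (Perm (Fin 3)) k = (1 / 2) ^ k + 3 * (1 / 3) ^ k - 3 * (1 / 6) ^ k := by
  have hcount : Nat.card {v : Fin k → Perm (Fin 3) // closure (Set.range v) ≠ ⊤} =
      1 + ((3 ^ k - 1) + 3 * (2 ^ k - 1)) := by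
    rw [Nat.card_congr (Equiv.subtypeEquivRight fun v =>
        closure_range_ne_top_iff_of_cover maxSubgroupPermFinThree_ne_top
          (fun _ => exists_le_maxSubgroupPermFinThree) v),
      natCard_exists_forall_mem_of_pairwise_inf_eq_bot pairwise_inf_maxSubgroupPermFinThree,
      Fintype.sum_option, natCard_maxSubgroupPermFinThree_none]
    simp only [natCard_maxSubgroupPermFinThree_some, sum_const, card_univ, Fintype.card_fin,
      smul_eq_mul]
  have h6 : (6 : ℝ) ^ k = 2 ^ k * 3 ^ k := by rw [← mul_pow]; norm_num
  rw [one_sub_genProb, hcount, natCard_perm_fin_three]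
  push_cast [Nat.one_le_pow, Nat.one_le_two_pow]
  rw [div_pow, div_pow, div_pow, one_pow, h6]
  field_simp
  ring

/-- `e(Sym(3)) = 29/10`. -/
theorem egen_symmGroup_three : egen (Equiv.Perm (Fin 3)) = 29 / 10 := by
  have hsum : HasSum (fun k => 1 - genProb (Perm (Fin 3)) k)
      ((1 - 1 / 2)⁻¹ + 3 * (1 - 1 / 3)⁻¹ - 3 * (1 - 1 / 6)⁻¹) := by
    simp only [one_sub_genProb_perm_fin_three]
    refine ((hasSum_geometric_of_lt_one ?_ ?_).add
      ((hasSum_geometric_of_lt_one ?_ ?_).mul_left 3)).sub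
      ((hasSum_geometric_of_lt_one ?_ ?_).mul_left 3) <;> norm_num
  rw [egen, hsum.tsum_eq]
  norm_num
end

section
/- Let G be a nontrivial finite group and let t be a positive integer. Then e(G) ≤ t + ∑_{k=t}^∞ ∑_{n=2}^∞ m_n(G)/n^k, where m_n(G) denotes the number of maximal subgroups of G of index n. -/
theorem tsum_le_add_tsum_nat_add_of_le_one {f g : ℕ → ℝ} (hf₀ : ∀ k, 0 ≤ f k)
    (hf₁ : ∀ k, f k ≤ 1) (hfg : ∀ k, f k ≤ g k) (hg : Summable g) (t : ℕ) :
    ∑' k, f k ≤ t + ∑' k, g (k + t) := by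
  have hf : Summable f := hg.of_nonneg_of_le hf₀ hfg
  rw [← hf.sum_add_tsum_nat_add t]
  gcongr ?_ + ?_
  · calc ∑ k ∈ Finset.range t, f k ≤ ∑ _k ∈ Finset.range t, (1 : ℝ) := by gcongr; exact hf₁ _
      _ = t := by simp
  · exact ((summable_nat_add_iff t).2 hf).tsum_le_tsum (fun k => hfg _)
      ((summable_nat_add_iff t).2 hg)

theorem hasSum_card_fiber_smul {α E : Type*} [AddCommGroup E] [UniformSpace E]
    [IsUniformAddGroup E] [CompleteSpace E] [T2Space E] [Finite α] (p : α → ℕ) (h : ℕ → E) :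
    HasSum (fun n => Nat.card (p ⁻¹' {n}) • h n) (∑' a, h (p a)) := by
  have hfiber (n : ℕ) : Nat.card (p ⁻¹' {n}) • h n = ∑' a : p ⁻¹' {n}, h (p a) := by
    rw [← tsum_const]
    exact tsum_congr fun a => by rw [show p a = n from a.2]
  simpa only [hfiber] using (Summable.of_finite (f := fun a => h (p a))).hasSum.tsum_fiberwise p

theorem Subgroup.inv_index_eq_card_div {G : Type*} [Group G] (H : Subgroup G) [Finite H] :
    (H.index : ℝ)⁻¹ = Nat.card H / Nat.card G := by
  have : (Nat.card H : ℝ) ≠ 0 := by exact_mod_cast Nat.card_pos.ne'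
  rw [← H.card_mul_index]
  push_cast
  field_simp

open Subgroup

section

variable (G : Type*) [Group G] [Finite G]

theorem card_not_generating_le_card_sigma_isCoatom (k : ℕ) :
    Nat.card {v : Fin k → G // closure (Set.range v) ≠ ⊤} ≤
      Nat.card (Σ M : {M : Subgroup G // IsCoatom M}, Fin k → M.1) := by
  have hM (v : {v : Fin k → G // closure (Set.range v) ≠ ⊤}) :
      ∃ M : Subgroup G, IsCoatom M ∧ closure (Set.range v.1) ≤ M :=
    (eq_top_or_exists_le_coatom _).resolve_left v.2
  choose M hM hle using hM
  refine Nat.card_le_card_of_injective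
    (fun v => ⟨⟨M v, hM v⟩, fun i => ⟨v.1 i, hle v (subset_closure (Set.mem_range_self i))⟩⟩) ?_
  intro v w hvw
  exact Subtype.ext <|
    congrArg (fun x : Σ M : {M : Subgroup G // IsCoatom M}, Fin k → M.1 => fun i => (x.2 i : G)) hvw

theorem one_sub_genProb_eq (k : ℕ) :
    1 - genProb G k =
      Nat.card {v : Fin k → G // closure (Set.range v) ≠ ⊤} / (Nat.card G : ℝ) ^ k := by
  classical
  have hcard := Nat.card_congr (Equiv.sumCompl fun v : Fin k → G => closure (Set.range v) = ⊤)
  rw [Nat.card_sum, Nat.card_fun, Nat.card_fin] at hcard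
  have : (Nat.card G : ℝ) ^ k ≠ 0 := by have := Nat.card_pos (α := G); positivity
  rw [genProb, eq_div_iff this, sub_mul, div_mul_cancel₀ _ this, one_mul, sub_eq_iff_eq_add']
  exact_mod_cast hcard.symm

theorem one_sub_genProb_le_tsum_inv_index_pow (k : ℕ) :
    1 - genProb G k ≤ ∑' M : {M : Subgroup G // IsCoatom M}, (M.1.index : ℝ)⁻¹ ^ k := by
  have := Fintype.ofFinite {M : Subgroup G // IsCoatom M}
  have hbad : (Nat.card {v : Fin k → G // closure (Set.range v) ≠ ⊤} : ℝ) ≤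
      ∑ M : {M : Subgroup G // IsCoatom M}, (Nat.card M : ℝ) ^ k := by
    have := card_not_generating_le_card_sigma_isCoatom G k
    simp only [Nat.card_sigma, Nat.card_fun, Nat.card_fin] at this
    exact_mod_cast this
  have hG : (0 : ℝ) < (Nat.card G : ℝ) ^ k := by have := Nat.card_pos (α := G); positivity
  rw [one_sub_genProb_eq, tsum_fintype]
  simp_rw [inv_index_eq_card_div, div_pow, ← Finset.sum_div]
  gcongr

theorem summable_tsum_inv_index_pow :
    Summable fun k : ℕ => ∑' M : {M : Subgroup G // IsCoatom M}, (M.1.index : ℝ)⁻¹ ^ k := by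
  have := Fintype.ofFinite {M : Subgroup G // IsCoatom M}
  simp_rw [tsum_fintype]
  exact summable_sum fun M _ => summable_geometric_of_lt_one (by positivity) <|
    inv_lt_one_of_one_lt₀ <| Nat.one_lt_cast.2 <| one_lt_index_of_ne_top M.2.1

theorem tsum_card_isCoatom_index_div_pow (K : ℕ) :
    ∑' j : ℕ, (Nat.card {M : Subgroup G // IsCoatom M ∧ M.index = j + 2} : ℝ) / ((j : ℝ) + 2) ^ K
      = ∑' M : {M : Subgroup G // IsCoatom M}, (M.1.index : ℝ)⁻¹ ^ K := by
  have hcard (n : ℕ) : Nat.card ((fun M : {M : Subgroup G // IsCoatom M} => M.1.index) ⁻¹' {n}) =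
      Nat.card {M : Subgroup G // IsCoatom M ∧ M.index = n} :=
    Nat.card_congr (Equiv.subtypeSubtypeEquivSubtypeInter IsCoatom fun M : Subgroup G => M.index = n)
  have hsmall (n : ℕ) (hn : n < 2) : Nat.card {M : Subgroup G // IsCoatom M ∧ M.index = n} = 0 :=
    Nat.card_eq_zero.2 <| .inl ⟨fun M => by have := one_lt_index_of_ne_top M.2.1.1; omega⟩
  have h := hasSum_card_fiber_smul (fun M : {M : Subgroup G // IsCoatom M} => M.1.index)
    (fun n => (n : ℝ)⁻¹ ^ K)
  rw [← hasSum_nat_add_iff' 2] at h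
  simp only [Finset.sum_range_succ, Finset.sum_range_zero, hcard, hsmall 0 (by norm_num),
    hsmall 1 (by norm_num), nsmul_eq_mul, Nat.cast_zero, zero_mul, add_zero, sub_zero] at h
  refine Eq.trans (tsum_congr fun j => ?_) h.tsum_eq
  push_cast
  rw [div_eq_mul_inv, inv_pow]

end

theorem egen_le_sum_maximal_subgroups_general (G : Type*) [Group G] [Finite G] (t : ℕ) :
    egen G ≤ t + ∑' k : ℕ, ∑' j : ℕ,
      (Nat.card {M : Subgroup G // IsCoatom M ∧ M.index = j + 2} : ℝ) /
        ((j : ℝ) + 2) ^ (k + t) := by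
  simp_rw [tsum_card_isCoatom_index_div_pow]
  refine tsum_le_add_tsum_nat_add_of_le_one (fun k => ?_) (fun k => ?_)
    (one_sub_genProb_le_tsum_inv_index_pow G) (summable_tsum_inv_index_pow G) t
  · rw [one_sub_genProb_eq]
    positivity
  · exact sub_le_self 1 (by unfold genProb; positivity)

/-- For a nontrivial finite group `G` and a positive integer `t`,
`e(G) ≤ t + ∑_{k ≥ t} ∑_{n ≥ 2} m_n(G)/n^k`, where `m_n(G)` is the number of
maximal subgroups of `G` of index `n`. -/
theorem egen_le_sum_maximal_subgroups (G : Type*) [Group G] [Finite G] [Nontrivial G]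
    (t : ℕ) (ht : 0 < t) :
    egen G ≤ t + ∑' k : ℕ, ∑' j : ℕ,
      (Nat.card {M : Subgroup G // IsCoatom M ∧ M.index = j + 2} : ℝ) /
        ((j : ℝ) + 2) ^ (k + t) :=
  egen_le_sum_maximal_subgroups_general G t
end

section
/- The expected number of random elements needed to generate the dihedral group of order 8 is e(D₈) = 10/3. -/
open Subgroup

theorem Set.ncard_union_union_add_two_mul {α : Type*} {A B C T : Set α} (hA : A.Finite)
    (hB : B.Finite) (hC : C.Finite) (hAB : A ∩ B = T) (hAC : A ∩ C = T) (hBC : B ∩ C = T) :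
    (A ∪ B ∪ C).ncard + 2 * T.ncard = A.ncard + B.ncard + C.ncard := by
  have hABC : (A ∪ B) ∩ C = T := by rw [Set.union_inter_distrib_right, hAC, hBC, Set.union_self]
  have h₁ := Set.ncard_union_add_ncard_inter A B hA hB
  have h₂ := Set.ncard_union_add_ncard_inter (A ∪ B) C (hA.union hB) hC
  rw [hAB] at h₁
  rw [hABC] at h₂
  omega

section TuplesIn

variable {G : Type*} [Group G]

def tuplesIn (H : Subgroup G) (k : ℕ) : Set (Fin k → G) := {v | ∀ j, v j ∈ H}

theorem tuplesIn_inf (H K : Subgroup G) (k : ℕ) :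
    tuplesIn (H ⊓ K) k = tuplesIn H k ∩ tuplesIn K k := by
  ext v
  simp only [tuplesIn, Set.mem_ofPred_eq, Set.mem_inter_iff, mem_inf, forall_and]

theorem ncard_tuplesIn [Finite G] (H : Subgroup G) (k : ℕ) :
    (tuplesIn H k).ncard = Nat.card H ^ k := by
  calc (tuplesIn H k).ncard = Nat.card (Fin k → H) :=
        (Nat.card_coe_set_eq _).symm.trans (Nat.card_congr Equiv.subtypePiEquivPi)
    _ = Nat.card H ^ k := by rw [Nat.card_fun, Nat.card_fin]

theorem closure_range_le_iff (H : Subgroup G) {k : ℕ} (v : Fin k → G) :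
    closure (Set.range v) ≤ H ↔ v ∈ tuplesIn H k := by
  rw [closure_le, Set.range_subset_iff]
  rfl

variable {M₁ M₂ M₃ : Subgroup G}

theorem closure_range_eq_top_iff (h₁ : M₁ ≠ ⊤) (h₂ : M₂ ≠ ⊤) (h₃ : M₃ ≠ ⊤)
    (hcover : ∀ H : Subgroup G, H ≠ ⊤ → H ≤ M₁ ∨ H ≤ M₂ ∨ H ≤ M₃) {k : ℕ} (v : Fin k → G) :
    closure (Set.range v) = ⊤ ↔ v ∉ tuplesIn M₁ k ∪ tuplesIn M₂ k ∪ tuplesIn M₃ k := by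
  simp only [Set.mem_union, ← closure_range_le_iff, not_or]
  constructor
  · intro h
    rw [h, top_le_iff, top_le_iff, top_le_iff]
    exact ⟨⟨h₁, h₂⟩, h₃⟩
  · intro ⟨⟨n₁, n₂⟩, n₃⟩
    by_contra h
    rcases hcover _ h with h | h | h <;> contradiction

theorem card_generating_add [Finite G] {Z : Subgroup G} (h₁ : M₁ ≠ ⊤) (h₂ : M₂ ≠ ⊤) (h₃ : M₃ ≠ ⊤)
    (hcover : ∀ H : Subgroup G, H ≠ ⊤ → H ≤ M₁ ∨ H ≤ M₂ ∨ H ≤ M₃)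
    (h₁₂ : M₁ ⊓ M₂ = Z) (h₁₃ : M₁ ⊓ M₃ = Z) (h₂₃ : M₂ ⊓ M₃ = Z) (k : ℕ) :
    Nat.card {v : Fin k → G // closure (Set.range v) = ⊤} +
        (Nat.card M₁ ^ k + Nat.card M₂ ^ k + Nat.card M₃ ^ k) =
      Nat.card G ^ k + 2 * Nat.card Z ^ k := by
  have hgen : {v : Fin k → G | closure (Set.range v) = ⊤} =
      (tuplesIn M₁ k ∪ tuplesIn M₂ k ∪ tuplesIn M₃ k)ᶜ := by
    ext v
    exact closure_range_eq_top_iff h₁ h₂ h₃ hcover v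
  have hcompl := Set.ncard_add_ncard_compl (tuplesIn M₁ k ∪ tuplesIn M₂ k ∪ tuplesIn M₃ k)
  have hincl := Set.ncard_union_union_add_two_mul (Set.toFinite (tuplesIn M₁ k))
    (Set.toFinite (tuplesIn M₂ k)) (Set.toFinite (tuplesIn M₃ k))
    (h₁₂ ▸ (tuplesIn_inf _ _ k).symm) (h₁₃ ▸ (tuplesIn_inf _ _ k).symm)
    (h₂₃ ▸ (tuplesIn_inf _ _ k).symm)
  simp only [ncard_tuplesIn] at hincl
  rw [Nat.card_fun, Nat.card_fin] at hcompl
  rw [← Set.coe_ofPred, Nat.card_coe_set_eq, hgen]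
  omega

end TuplesIn

namespace DihedralFour

open DihedralGroup

def rotations : Subgroup (DihedralGroup 4) where
  carrier := ↑({r 0, r 1, r 2, r 3} : Finset (DihedralGroup 4))
  mul_mem' := by decide
  one_mem' := by decide
  inv_mem' := by decide

def kleinEven : Subgroup (DihedralGroup 4) where
  carrier := ↑({r 0, r 2, sr 0, sr 2} : Finset (DihedralGroup 4))
  mul_mem' := by decide
  one_mem' := by decide
  inv_mem' := by decide

def kleinOdd : Subgroup (DihedralGroup 4) where
  carrier := ↑({r 0, r 2, sr 1, sr 3} : Finset (DihedralGroup 4))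
  mul_mem' := by decide
  one_mem' := by decide
  inv_mem' := by decide

instance : DecidablePred (· ∈ rotations) := fun g =>
  inferInstanceAs (Decidable (g ∈ ({r 0, r 1, r 2, r 3} : Finset (DihedralGroup 4))))

instance : DecidablePred (· ∈ kleinEven) := fun g =>
  inferInstanceAs (Decidable (g ∈ ({r 0, r 2, sr 0, sr 2} : Finset (DihedralGroup 4))))

instance : DecidablePred (· ∈ kleinOdd) := fun g =>
  inferInstanceAs (Decidable (g ∈ ({r 0, r 2, sr 1, sr 3} : Finset (DihedralGroup 4))))

theorem rotations_ne_top : rotations ≠ ⊤ := fun h => (by decide : sr 0 ∉ rotations) (h ▸ mem_top _)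

theorem kleinEven_ne_top : kleinEven ≠ ⊤ := fun h => (by decide : r 1 ∉ kleinEven) (h ▸ mem_top _)

theorem kleinOdd_ne_top : kleinOdd ≠ ⊤ := fun h => (by decide : r 1 ∉ kleinOdd) (h ▸ mem_top _)

theorem rotations_inf_kleinEven : rotations ⊓ kleinEven = center (DihedralGroup 4) := by
  ext g; rw [mem_inf]; revert g; decide

theorem rotations_inf_kleinOdd : rotations ⊓ kleinOdd = center (DihedralGroup 4) := by
  ext g; rw [mem_inf]; revert g; decide

theorem kleinEven_inf_kleinOdd : kleinEven ⊓ kleinOdd = center (DihedralGroup 4) := by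
  ext g; rw [mem_inf]; revert g; decide

theorem exists_mem_rotations_notMem_center (b c : DihedralGroup 4) (hb : b ∉ kleinEven)
    (hc : c ∉ kleinOdd) : ∃ x ∈ ({b, c, b * c} : Set (DihedralGroup 4)),
      x ∈ rotations ∧ x ∉ center (DihedralGroup 4) := by
  revert b c; decide

theorem exists_eq_pow_or_eq_mul_pow {a x : DihedralGroup 4} (ha : a ∉ rotations)
    (hx : x ∈ rotations) (hx' : x ∉ center (DihedralGroup 4)) (g : DihedralGroup 4) :
    ∃ m : Fin 4, g = x ^ (m : ℕ) ∨ g = a * x ^ (m : ℕ) := by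
  revert a x g; decide

theorem le_or_le_or_le_of_ne_top (H : Subgroup (DihedralGroup 4)) (hH : H ≠ ⊤) :
    H ≤ rotations ∨ H ≤ kleinEven ∨ H ≤ kleinOdd := by
  by_contra! h
  simp only [SetLike.not_le_iff_exists] at h
  obtain ⟨⟨a, haH, ha⟩, ⟨b, hbH, hb⟩, ⟨c, hcH, hc⟩⟩ := h
  obtain ⟨x, hxH, hx, hx'⟩ : ∃ x ∈ H, x ∈ rotations ∧ x ∉ center (DihedralGroup 4) := by
    obtain ⟨x, hbcx, hx⟩ := exists_mem_rotations_notMem_center b c hb hc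
    rcases hbcx with rfl | rfl | rfl
    exacts [⟨x, hbH, hx⟩, ⟨x, hcH, hx⟩, ⟨b * c, mul_mem hbH hcH, hx⟩]
  refine hH (eq_top_iff' H |>.mpr fun g => ?_)
  obtain ⟨m, rfl | rfl⟩ := exists_eq_pow_or_eq_mul_pow ha hx hx' g
  exacts [pow_mem hxH m, mul_mem haH (pow_mem hxH m)]

theorem card_generating (k : ℕ) :
    Nat.card {v : Fin k → DihedralGroup 4 // closure (Set.range v) = ⊤} + 3 * 4 ^ k =
      8 ^ k + 2 * 2 ^ k := by
  have h := card_generating_add rotations_ne_top kleinEven_ne_top kleinOdd_ne_top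
    le_or_le_or_le_of_ne_top rotations_inf_kleinEven rotations_inf_kleinOdd
    kleinEven_inf_kleinOdd k
  have h₁ : Nat.card rotations = 4 := by rw [Nat.card_eq_fintype_card]; rfl
  have h₂ : Nat.card kleinEven = 4 := by rw [Nat.card_eq_fintype_card]; rfl
  have h₃ : Nat.card kleinOdd = 4 := by rw [Nat.card_eq_fintype_card]; rfl
  have hZ : Nat.card (center (DihedralGroup 4)) = 2 := by rw [Nat.card_eq_fintype_card]; rfl
  have hG : Nat.card (DihedralGroup 4) = 8 := nat_card
  rw [h₁, h₂, h₃, hZ, hG] at h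
  omega

theorem one_sub_genProb (k : ℕ) :
    1 - genProb (DihedralGroup 4) k = 3 * (1 / 2 : ℝ) ^ k - 2 * (1 / 4 : ℝ) ^ k := by
  have hN : (Nat.card {v : Fin k → DihedralGroup 4 // closure (Set.range v) = ⊤} : ℝ) =
      8 ^ k + 2 * 2 ^ k - 3 * 4 ^ k := by
    rw [eq_sub_iff_add_eq]
    exact_mod_cast card_generating k
  have h8 : (8 : ℝ) ^ k = 2 ^ k * 4 ^ k := by rw [← mul_pow]; norm_num
  have hG : (Nat.card (DihedralGroup 4) : ℝ) = 8 := by rw [nat_card]; norm_num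
  rw [genProb, hN, hG, h8, div_pow, div_pow, one_pow]
  field_simp
  ring

end DihedralFour

/-- `e(D₈) = 10/3`, where `D₈` is the dihedral group of order 8. -/
theorem egen_dihedral_eight : egen (DihedralGroup 4) = 10 / 3 := by
  have h₂ : HasSum (fun k : ℕ => (1 / 2 : ℝ) ^ k) 2 := hasSum_geometric_two
  have h₄ : HasSum (fun k : ℕ => (1 / 4 : ℝ) ^ k) (4 / 3) := by
    convert hasSum_geometric_of_lt_one (r := 1 / 4) (by norm_num) (by norm_num) using 1
    norm_num
  rw [egen, funext DihedralFour.one_sub_genProb, ((h₂.mul_left 3).sub (h₄.mul_left 2)).tsum_eq]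
  norm_num
end

section
/- The expected number of random elements needed to generate the direct product of a cyclic group of order 2 with the symmetric group on 3 points is e((ℤ/2ℤ) × Sym(3)) = 1181/330. -/
open Set Finset

section Invariance

variable {G H : Type*} [Group G] [Group H]

theorem genProb_congr (e : G ≃* H) (k : ℕ) : genProb G k = genProb H k := by
  have hgen (v : Fin k → G) :
      Subgroup.closure (range v) = ⊤ ↔ Subgroup.closure (range (e ∘ v)) = ⊤ := by
    rw [range_comp, ← MulEquiv.coe_toMonoidHom, ← MonoidHom.map_closure]
    exact (map_eq_top_iff e.mapSubgroup).symm
  unfold genProb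
  rw [Nat.card_congr e.toEquiv, Nat.card_congr (((Equiv.refl _).arrowCongr e.toEquiv).subtypeEquiv
    (q := fun w => Subgroup.closure (range w) = ⊤) hgen)]

theorem egen_congr (e : G ≃* H) : egen G = egen H := by
  simp only [egen, genProb_congr e]

end Invariance

section Weighting

variable {G : Type*} [Group G] {ι : Type*} [Fintype ι]

open scoped Classical in
def IsProperWeighting (H : ι → Subgroup G) (c : ι → ℤ) : Prop :=
  ∀ K : Subgroup G, (if K = ⊤ then 0 else 1 : ℤ) = ∑ i, c i * if K ≤ H i then 1 else 0

theorem card_tuples_mem (K : Subgroup G) (k : ℕ) :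
    Nat.card {v : Fin k → G // ∀ j, v j ∈ K} = Nat.card K ^ k := by
  rw [Nat.card_congr Equiv.subtypePiEquivPi, Nat.card_fun, Nat.card_fin]

variable [Finite G] {H : ι → Subgroup G} {c : ι → ℤ}

open scoped Classical in
theorem card_pow_sub_card_generating (hc : IsProperWeighting H c) (k : ℕ) :
    (Nat.card G : ℤ) ^ k - Nat.card {v : Fin k → G // Subgroup.closure (range v) = ⊤} =
      ∑ i, c i * (Nat.card (H i) : ℤ) ^ k := by
  have : Fintype G := Fintype.ofFinite G
  calc (Nat.card G : ℤ) ^ k - Nat.card {v : Fin k → G // Subgroup.closure (range v) = ⊤}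
      = ∑ v : Fin k → G, (1 - if Subgroup.closure (range v) = ⊤ then 1 else 0 : ℤ) := by
        simp [sum_sub_distrib, sum_boole, Nat.card_eq_fintype_card, Fintype.card_subtype]
    _ = ∑ v : Fin k → G, ∑ i, c i * if ∀ j, v j ∈ H i then 1 else 0 := by
        refine sum_congr rfl fun v _ => ?_
        have h := hc (Subgroup.closure (range v))
        simp only [Subgroup.closure_le, range_subset_iff, SetLike.mem_coe] at h
        rw [← h]
        split_ifs <;> rfl
    _ = ∑ i, c i * (Nat.card (H i) : ℤ) ^ k := by
        rw [sum_comm]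
        refine sum_congr rfl fun i _ => ?_
        rw [← mul_sum, sum_boole, ← Nat.cast_pow, ← card_tuples_mem, Nat.card_eq_fintype_card,
          Fintype.card_subtype]

theorem egen_eq_sum (hH : ∀ i, H i ≠ ⊤) (hc : IsProperWeighting H c) :
    egen G = ∑ i, c i * (Nat.card G / (Nat.card G - Nat.card (H i)) : ℝ) := by
  have hG : (0 : ℝ) < Nat.card G := by exact_mod_cast Nat.card_pos
  have hterm (k : ℕ) :
      1 - genProb G k = ∑ i, c i * ((Nat.card (H i) : ℝ) / Nat.card G) ^ k := by
    have hcount : (Nat.card G : ℝ) ^ k -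
        Nat.card {v : Fin k → G // Subgroup.closure (range v) = ⊤} =
          ∑ i, c i * (Nat.card (H i) : ℝ) ^ k := by
      exact_mod_cast card_pow_sub_card_generating hc k
    rw [genProb, one_sub_div (by positivity), hcount, sum_div]
    simp only [div_pow, mul_div_assoc]
  have hgeom (i : ι) : HasSum (fun k => c i * ((Nat.card (H i) : ℝ) / Nat.card G) ^ k)
      (c i * (Nat.card G / (Nat.card G - Nat.card (H i)) : ℝ)) := by
    have hlt : (Nat.card (H i) : ℝ) < Nat.card G := by
      exact_mod_cast (H i).card_le_card_group.lt_of_ne (mt (H i).card_eq_iff_eq_top.1 (hH i))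
    have hsum : (1 - (Nat.card (H i) : ℝ) / Nat.card G)⁻¹ =
        Nat.card G / (Nat.card G - Nat.card (H i)) := by
      rw [one_sub_div hG.ne', inv_div]
    simpa only [hsum] using
      (hasSum_geometric_of_lt_one (by positivity) ((div_lt_one hG).2 hlt)).mul_left (c i : ℝ)
  simp only [egen, hterm]
  exact (hasSum_sum fun i _ => hgeom i).tsum_eq

end Weighting

namespace DihedralGroup

def sixToProd : DihedralGroup 6 →* Multiplicative (ZMod 2) × Equiv.Perm (Fin 3) where
  toFun
    | r i => (Multiplicative.ofAdd (i.val : ZMod 2), (Equiv.swap 0 1 * Equiv.swap 1 2) ^ i.val)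
    | sr i => (Multiplicative.ofAdd (i.val + 1 : ZMod 2),
        Equiv.swap 0 1 * (Equiv.swap 0 1 * Equiv.swap 1 2) ^ i.val)
  map_one' := rfl
  map_mul' := by decide +kernel

theorem sixToProd_injective : Function.Injective sixToProd := by
  decide +kernel

noncomputable def sixEquivProd : DihedralGroup 6 ≃* Multiplicative (ZMod 2) × Equiv.Perm (Fin 3) :=
  MulEquiv.ofBijective sixToProd <| sixToProd_injective.bijective_of_nat_card_le <| by
    simp [Fintype.card_perm, card, Nat.factorial]

namespace Six

def elements : List (DihedralGroup 6) :=
  [r 0, r 1, r 2, r 3, r 4, r 5, sr 0, sr 1, sr 2, sr 3, sr 4, sr 5]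

theorem mem_elements : ∀ g, g ∈ elements := by
  decide

def carrier : Fin 15 → Finset (DihedralGroup 6) :=
  ![{r 0, r 1, r 2, r 3, r 4, r 5},
    {r 0, r 2, r 4, sr 0, sr 2, sr 4}, {r 0, r 2, r 4, sr 1, sr 3, sr 5},
    {r 0, r 3, sr 0, sr 3}, {r 0, r 3, sr 1, sr 4}, {r 0, r 3, sr 2, sr 5},
    {r 0, r 2, r 4}, {r 0, r 3},
    {r 0, sr 0}, {r 0, sr 1}, {r 0, sr 2}, {r 0, sr 3}, {r 0, sr 4}, {r 0, sr 5},
    {r 0}]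

-- `weight i = -μ(carrier i, D₆)` for the Möbius function `μ` of the subgroup lattice.
def weight : Fin 15 → ℤ := ![1, 1, 1, 1, 1, 1, -2, -3, -1, -1, -1, -1, -1, -1, 6]

theorem div_mem_carrier : ∀ i, ∀ x ∈ carrier i, ∀ y ∈ carrier i, x * y⁻¹ ∈ carrier i := by
  decide +kernel

theorem card_carrier :
    ∀ i, (carrier i).card = ![6, 6, 6, 4, 4, 4, 3, 2, 2, 2, 2, 2, 2, 2, 1] i := by
  decide

def properSubgroup (i : Fin 15) : Subgroup (DihedralGroup 6) :=
  Subgroup.ofDiv (carrier i) ⟨r 0, by revert i; decide⟩ (div_mem_carrier i)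

theorem mem_properSubgroup {i : Fin 15} {g : DihedralGroup 6} :
    g ∈ properSubgroup i ↔ g ∈ carrier i :=
  Iff.rfl

theorem card_properSubgroup (i : Fin 15) : Nat.card (properSubgroup i) = (carrier i).card := by
  change Nat.card (carrier i : Set (DihedralGroup 6)) = _
  rw [Nat.card_coe_set_eq, ncard_coe_finset]

theorem properSubgroup_ne_top (i : Fin 15) : properSubgroup i ≠ ⊤ := by
  rw [Ne, ← Subgroup.card_eq_iff_eq_top, card_properSubgroup, card_carrier, nat_card]
  revert i
  decide

set_option maxRecDepth 10000 in
theorem ite_eq_sum_weight_of_mul_closed : ∀ S ∈ elements.sublists,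
    (∀ x ∈ S, ∀ y ∈ S, x * y ∈ S) →
      (if ∀ g ∈ elements, g ∈ S then 0 else 1 : ℤ) =
        ∑ i, weight i * if ∀ g ∈ S, g ∈ carrier i then 1 else 0 := by
  decide +kernel

theorem isProperWeighting : IsProperWeighting properSubgroup weight := by
  classical
  intro K
  let S := elements.filter (· ∈ K)
  have hS (g) : g ∈ S ↔ g ∈ K := by simp [S, mem_elements g]
  have key := ite_eq_sum_weight_of_mul_closed S (List.mem_sublists.2 List.filter_sublist)
    fun x hx y hy => (hS _).2 (K.mul_mem ((hS x).1 hx) ((hS y).1 hy))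
  simpa [hS, mem_elements, Subgroup.eq_top_iff', SetLike.le_def, mem_properSubgroup] using key

end Six

end DihedralGroup

open DihedralGroup DihedralGroup.Six in
/-- `e((ℤ/2ℤ) × Sym(3)) = 1181/330`. -/
theorem egen_c2_times_sym3 :
    egen (Multiplicative (ZMod 2) × Equiv.Perm (Fin 3)) = 1181 / 330 := by
  rw [← egen_congr sixEquivProd, egen_eq_sum properSubgroup_ne_top isProperWeighting]
  simp only [nat_card, card_properSubgroup, card_carrier]
  simp [Fin.sum_univ_succ, weight]
  norm_num
end

section
/- The expected number of random elements needed to generate the elementary abelian group of order 8 is e((ℤ/2ℤ)³) = 94/21. -/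
open Set

theorem Submodule.span_zmod_eq_addSubgroupClosure (n : ℕ) {M : Type*} [AddCommGroup M]
    [Module (ZMod n) M] (s : Set M) :
    (span (ZMod n) s).toAddSubgroup = AddSubgroup.closure s :=
  le_antisymm
    ((toAddSubgroup_le _ (AddSubgroup.toZModSubmodule n (AddSubgroup.closure s))).2
      (span_le.2 AddSubgroup.subset_closure))
    ((AddSubgroup.closure_le _).2 subset_span)

theorem Subgroup.closure_range_ofAdd_eq_top_iff (n : ℕ) {ι M : Type*} [AddCommGroup M]
    [Module (ZMod n) M] (w : ι → M) :
    closure (range (Multiplicative.ofAdd ∘ w)) = ⊤ ↔ Submodule.span (ZMod n) (range w) = ⊤ := by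
  rw [← Submodule.toAddSubgroup_inj, Submodule.span_zmod_eq_addSubgroupClosure,
    ← AddSubgroup.toSubgroup.injective.eq_iff, AddSubgroup.toSubgroup_closure]
  rfl

theorem MulEquiv.closure_range_comp_eq_top_iff {G H ι : Type*} [Group G] [Group H] (e : G ≃* H)
    (v : ι → G) :
    Subgroup.closure (range (e ∘ v)) = ⊤ ↔ Subgroup.closure (range v) = ⊤ := by
  rw [range_comp, ← e.coe_toMonoidHom, ← MonoidHom.map_closure,
    ← Subgroup.map_top_of_surjective e.toMonoidHom e.surjective,
    (Subgroup.map_injective e.injective).eq_iff]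

theorem Subgroup.closure_range_eq_top_iff_span_toAdd (n : ℕ) {ι κ M : Type*} [AddCommGroup M]
    [Module (ZMod n) M] (v : ι → κ → Multiplicative M) :
    closure (range v) = ⊤ ↔
      Submodule.span (ZMod n) (range fun i j ↦ (v i j).toAdd) = ⊤ :=
  ((MulEquiv.piMultiplicative fun _ : κ ↦ M).closure_range_comp_eq_top_iff _).trans
    (closure_range_ofAdd_eq_top_iff n _)

theorem Matrix.span_row_eq_top_iff_linearIndependent_col {m n K : Type*} [Fintype m] [Fintype n]
    [Field K] (A : Matrix m n K) :
    Submodule.span K (range A.row) = ⊤ ↔ LinearIndependent K A.col := by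
  rw [Submodule.eq_top_iff_finrank_eq, ← rank_eq_finrank_span_row, rank_eq_finrank_span_cols,
    linearIndependent_iff_card_eq_finrank_span, Module.finrank_fintype_fun_eq_card, eq_comm]
  rfl

theorem card_span_range_eq_top {K : Type*} [Field K] [Fintype K] (m k : ℕ) :
    Nat.card {v : Fin k → Fin m → K // Submodule.span K (range v) = ⊤} =
      ∏ i : Fin m, (Fintype.card K ^ k - Fintype.card K ^ (i : ℕ)) := calc
  _ = Nat.card {u : Fin m → Fin k → K // LinearIndependent K u} :=
    Nat.card_congr <| .subtypeEquiv (.piComm _) fun v ↦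
      Matrix.span_row_eq_top_iff_linearIndependent_col v
  _ = _ := by
    by_cases hmk : m ≤ k
    · rw [card_linearIndependent (by simpa using hmk), Module.finrank_fin_fun]
    · have : IsEmpty {u : Fin m → Fin k → K // LinearIndependent K u} :=
        ⟨fun ⟨u, hu⟩ ↦ hmk (by simpa using hu.fintype_card_le_finrank)⟩
      rw [Nat.card_of_isEmpty, eq_comm]
      -- the factor `i = k` is `0`; the truncated factors `i > k` do not matter
      exact Finset.prod_eq_zero (i := ⟨k, by omega⟩) (Finset.mem_univ _) (Nat.sub_self _)

theorem card_closure_range_eq_top_pi_zmod (p : ℕ) [Fact p.Prime] (m k : ℕ) :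
    Nat.card {v : Fin k → Fin m → Multiplicative (ZMod p) // Subgroup.closure (range v) = ⊤} =
      ∏ i : Fin m, (p ^ k - p ^ (i : ℕ)) := calc
  _ = Nat.card {w : Fin k → Fin m → ZMod p // Submodule.span (ZMod p) (range w) = ⊤} :=
    Nat.card_congr <|
      .subtypeEquiv (.piCongrRight fun _ ↦ .piCongrRight fun _ ↦ Multiplicative.toAdd)
        (Subgroup.closure_range_eq_top_iff_span_toAdd p)
  _ = _ := by simpa using card_span_range_eq_top (K := ZMod p) m k

theorem genProb_pi_zmod (p : ℕ) [hp : Fact p.Prime] (m k : ℕ) :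
    genProb (Fin m → Multiplicative (ZMod p)) k =
      ∏ i : Fin m, (1 - (p : ℝ) ^ (i : ℕ) / (p : ℝ) ^ k) := by
  rw [genProb, card_closure_range_eq_top_pi_zmod,
    show Nat.card (Fin m → Multiplicative (ZMod p)) = p ^ m by simp]
  by_cases hmk : m ≤ k
  · rw [Nat.cast_prod, Nat.cast_pow, ← pow_mul, mul_comm, pow_mul,
      show ((p : ℝ) ^ k) ^ m = ∏ _i : Fin m, (p : ℝ) ^ k by simp, ← Finset.prod_div_distrib]
    refine Finset.prod_congr rfl fun i _ ↦ ?_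
    have : p ^ (i : ℕ) ≤ p ^ k := Nat.pow_le_pow_right hp.out.pos (by omega)
    push_cast [Nat.cast_sub this]
    rw [sub_div, div_self (pow_ne_zero _ (Nat.cast_ne_zero.2 hp.out.ne_zero))]
  · have hk : k < m := by omega
    rw [Finset.prod_eq_zero (i := (⟨k, hk⟩ : Fin m)) (Finset.mem_univ _) (Nat.sub_self _),
      Finset.prod_eq_zero (i := (⟨k, hk⟩ : Fin m)) (Finset.mem_univ _) (by simp [hp.out.ne_zero])]
    simp

theorem one_sub_genProb_elementary_abelian_eight (k : ℕ) :
    1 - genProb (Fin 3 → Multiplicative (ZMod 2)) k =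
      7 * (1 / 2 : ℝ) ^ k - 14 * (1 / 4 : ℝ) ^ k + 8 * (1 / 8 : ℝ) ^ k := by
  have h4 : (4 : ℝ) ^ k = (2 ^ k) ^ 2 := by rw [← pow_mul, mul_comm, pow_mul]; norm_num
  have h8 : (8 : ℝ) ^ k = (2 ^ k) ^ 3 := by rw [← pow_mul, mul_comm, pow_mul]; norm_num
  rw [genProb_pi_zmod, Fin.prod_univ_three, one_div_pow, one_div_pow, one_div_pow, h4, h8]
  simp only [Fin.val_zero, Fin.val_one, Fin.val_two]
  push_cast
  field_simp
  ring

/-- `e((ℤ/2ℤ)³) = 94/21`. -/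
theorem egen_elementary_abelian_eight :
    egen (Fin 3 → Multiplicative (ZMod 2)) = 94 / 21 := by
  have geom (r : ℝ) (hr : r ∈ Ico 0 1) := hasSum_geometric_of_lt_one hr.1 hr.2
  have h := (((geom (1 / 2) (by norm_num)).mul_left 7).sub
    ((geom (1 / 4) (by norm_num)).mul_left 14)).add ((geom (1 / 8) (by norm_num)).mul_left 8)
  rw [egen, funext one_sub_genProb_elementary_abelian_eight, h.tsum_eq]
  norm_num
end
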